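/- (Well-Defined Domain) Let Λ be a normal term-modal logic containing the Knowledge of Identity theorem (x = y) → K_t(x = y). Let W be an R-path-connected collection of maximally Λ-consistent sets, where (w, w') ∈ R(α) implies that whenever K_x φ ∈ w with x designating agent α, then φ ∈ w'. Then for any two worlds w, w' ∈ W and any variables x, y: (x = y) ∈ w if and only if (x = y) ∈ w'. -/
import Mathlib


/-- The two sorts: agents and objects. -/
inductive Srt : Type | agt | obj
deriving DecidableEq

/-- Variables, tagged with a sort. -/
abbrev Var : Type := Srt × ℕ

/-- Terms: variables and constants, each tagged with a sort. -/
inductive Tm : Type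
  | var : Var → Tm
  | con : Var → Tm
deriving DecidableEq

/-- The sort of a term. -/
def Tm.srt : Tm → Srt
  | .var x => x.1
  | .con c => c.1

/-- Formulas of the two-sorted term-modal language. -/
inductive Fml : Type
  | rel : ℕ → List Tm → Fml
  | eq : Tm → Tm → Fml
  | neg : Fml → Fml
  | imp : Fml → Fml → Fml
  | all : Var → Fml → Fml
  | K : Tm → Fml → Fml
deriving DecidableEq

/-- Conjunction, defined from negation and implication. -/
def Fml.and (φ ψ : Fml) : Fml := Fml.neg (φ.imp ψ.neg)

/-- An assignment of truth values to formulas that is boolean-homomorphic on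
negation and implication. -/
def BoolHom (b : Fml → Bool) : Prop :=
  (∀ φ, b (Fml.neg φ) = !b φ) ∧ (∀ φ ψ, b (Fml.imp φ ψ) = (!b φ || b ψ))

/-- Substitution instances of propositional tautologies: formulas true under
every assignment that is boolean-homomorphic on ¬ and →. -/
def Taut (φ : Fml) : Prop := ∀ b : Fml → Bool, BoolHom b → b φ = true

/-- Conjunction of a finite list of formulas (empty list gives a tautology). -/
def conjF : List Fml → Fml
  | [] => Fml.imp (Fml.rel 0 []) (Fml.rel 0 [])
  | φ :: l => φ.and (conjF l)

/-- Γ ⊢_Λ φ : some finite conjunction of members of Γ provably implies φ in Λ. -/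
def Deduces (Λ Γ : Set Fml) (φ : Fml) : Prop :=
  ∃ l : List Fml, (∀ ψ ∈ l, ψ ∈ Γ) ∧ Fml.imp (conjF l) φ ∈ Λ

/-- Γ is Λ-consistent: no contradiction φ ∧ ¬φ is deducible from Γ. -/
def Consistent (Λ Γ : Set Fml) : Prop := ¬ ∃ φ : Fml, Deduces Λ Γ (φ.and φ.neg)

/-- Maximally Λ-consistent set. -/
def MaxConsistent (Λ Γ : Set Fml) : Prop :=
  Consistent Λ Γ ∧ ∀ Δ : Set Fml, Γ ⊂ Δ → ¬ Consistent Λ Δ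

lemma conjF_eval (b : Fml → Bool) (hb : BoolHom b) (l : List Fml) :
    b (conjF l) = l.all b := by
  induction l with
  | nil => simp [conjF, hb.2]
  | cons φ l ih =>
      simp only [conjF, Fml.and, hb.1, hb.2, ih, List.all_cons]
      cases b φ <;> cases l.all b <;> rfl

/-- Maximally consistent sets are closed under implications belonging to Λ. -/
lemma maxcons_closed (Λ w : Set Fml)
    (taut : ∀ φ, Taut φ → φ ∈ Λ)
    (mp : ∀ φ ψ : Fml, Fml.imp φ ψ ∈ Λ → φ ∈ Λ → ψ ∈ Λ)
    (hw : MaxConsistent Λ w)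
    {φ ψ : Fml} (h : Fml.imp φ ψ ∈ Λ) (hφ : φ ∈ w) : ψ ∈ w := by
  by_contra hψ
  have hss : w ⊂ insert ψ w :=
    ⟨Set.subset_insert _ _, fun hsub => hψ (hsub (Set.mem_insert _ _))⟩
  have hincon := hw.2 _ hss
  apply hw.1
  rw [Consistent, not_not] at hincon
  obtain ⟨χ, l, hl, hlΛ⟩ := hincon
  set l' : List Fml := l.filter (fun θ => θ ≠ ψ) with hl'
  -- (φ → ψ) → (conjF (φ :: l') → conjF l) is a tautology
  have htaut : Taut (Fml.imp (Fml.imp φ ψ)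
      (Fml.imp (conjF (φ :: l')) (conjF l))) := by
    intro b hb
    simp only [hb.2, conjF_eval b hb, List.all_cons]
    by_cases h1 : b φ = true
    · by_cases h2 : b ψ = true
      · by_cases h3 : l'.all b = true
        · have h4 : l.all b = true := by
            rw [List.all_eq_true] at h3 ⊢
            intro θ hθ
            by_cases hθψ : θ = ψ
            · rw [hθψ]; exact h2
            · exact h3 θ (List.mem_filter.2 ⟨hθ, by simp [hθψ]⟩)
          simp [h1, h2, h3, h4]
        · simp only [Bool.not_eq_true] at h3
          simp [h1, h2, h3]
      · simp only [Bool.not_eq_true] at h2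
        simp [h1, h2]
    · simp only [Bool.not_eq_true] at h1
      simp [h1]
  have h1 : Fml.imp (conjF (φ :: l')) (conjF l) ∈ Λ :=
    mp _ _ (taut _ htaut) h
  -- transitivity tautology
  have htrans : Taut (Fml.imp (Fml.imp (conjF (φ :: l')) (conjF l))
      (Fml.imp (Fml.imp (conjF l) (χ.and χ.neg))
        (Fml.imp (conjF (φ :: l')) (χ.and χ.neg)))) := by
    intro b hb
    simp only [hb.2]
    cases b (conjF (φ :: l')) <;> cases b (conjF l) <;>
      cases b (Fml.and χ χ.neg) <;> rfl
  have h2 : Fml.imp (conjF (φ :: l')) (χ.and χ.neg) ∈ Λ :=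
    mp _ _ (mp _ _ (taut _ htrans) h1) hlΛ
  refine ⟨χ, φ :: l', ?_, h2⟩
  intro θ hθ
  rcases List.mem_cons.1 hθ with rfl | hθ'
  · exact hφ
  · have := List.mem_filter.1 hθ'
    rcases hl θ this.1 with h | h
    · exact absurd h (by simpa using this.2)
    · exact h

/-- Well-Defined Domain: let Λ be a normal term-modal logic
(tautologies, modus ponens, knowledge generalization) containing the
Knowledge of Identity theorem (x = y) → K_t(x = y).  Let W be an
R-path-connected collection of maximally Λ-consistent sets such that an
R(α)-step transfers the contents of K_x-operators for x designating α, and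
suppose every agent is designated by some agent-sorted variable.  Then any
two worlds of W contain exactly the same equalities between variables. -/
theorem well_defined_domain (Λ : Set Fml)
    (taut : ∀ φ, Taut φ → φ ∈ Λ)
    (mp : ∀ φ ψ : Fml, Fml.imp φ ψ ∈ Λ → φ ∈ Λ → ψ ∈ Λ)
    (kg : ∀ (t : Tm) (φ : Fml), t.srt = Srt.agt → φ ∈ Λ → Fml.K t φ ∈ Λ)
    (ki : ∀ (x y : Var) (t : Tm), t.srt = Srt.agt →
      Fml.imp (Fml.eq (Tm.var x) (Tm.var y))
        (Fml.K t (Fml.eq (Tm.var x) (Tm.var y))) ∈ Λ)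
    (A : Type) (Des : Var → A → Prop)
    (hDes : ∀ α : A, ∃ x : Var, x.1 = Srt.agt ∧ Des x α)
    (R : A → Set Fml → Set Fml → Prop)
    (W : Set (Set Fml))
    (hW : ∀ w ∈ W, MaxConsistent Λ w)
    (hR : ∀ (α : A) (w w' : Set Fml), R α w w' →
      ∀ (x : Var) (φ : Fml), Des x α → Fml.K (Tm.var x) φ ∈ w → φ ∈ w')
    (hpath : ∀ w ∈ W, ∀ w' ∈ W,
      Relation.ReflTransGen
        (fun u u' => u ∈ W ∧ u' ∈ W ∧ ∃ α : A, R α u u') w w') :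
    ∀ w ∈ W, ∀ w' ∈ W, ∀ x y : Var,
      (Fml.eq (Tm.var x) (Tm.var y) ∈ w ↔ Fml.eq (Tm.var x) (Tm.var y) ∈ w') := by
  intro w hw₁ w' hw₂ x y
  have key : ∀ u u' : Set Fml,
      Relation.ReflTransGen
        (fun u u' => u ∈ W ∧ u' ∈ W ∧ ∃ α : A, R α u u') u u' →
      Fml.eq (Tm.var x) (Tm.var y) ∈ u → Fml.eq (Tm.var x) (Tm.var y) ∈ u' := by
    intro u u' hpath heq
    induction hpath with
    | refl => exact heq
    | tail _ hstep ih =>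
        obtain ⟨hvW, _, α, hα⟩ := hstep
        obtain ⟨z, hz, hzα⟩ := hDes α
        have hsrt : (Tm.var z).srt = Srt.agt := hz
        have hK : Fml.K (Tm.var z) (Fml.eq (Tm.var x) (Tm.var y)) ∈ _ :=
          maxcons_closed Λ _ taut mp (hW _ hvW) (ki x y (Tm.var z) hsrt) ih
        exact hR α _ _ hα z _ hzα hK
  exact ⟨key w w' (hpath w hw₁ w' hw₂), key w' w (hpath w' hw₂ w hw₁)⟩
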